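/- Let v ∈ ℂ^n be nonzero and A ∈ ℂ^{n×n} invertible. Then ‖v A^{-1}‖² / (1 + ‖v A^{-1}‖²) ≥ ‖v‖² / (‖A‖_F² + ‖v‖²), with equality iff ‖v A^{-1}‖ · ‖A‖_F = ‖v‖. -/

import Mathlib

/-! With `w = v A⁻¹` we have `v = w A`, so Cauchy–Schwarz in each column of `A` gives
`‖v‖ ≤ ‖w‖ ‖A‖_F`. For reals `x, y` and `z > 0`,
`x² / (1 + x²) - z² / (y² + z²) = ((x y)² - z²) / ((1 + x²) (y² + z²))`,
which is nonnegative when `z ≤ x y` and vanishes exactly when `x y = z`. -/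

noncomputable def vecEnorm {n : ℕ} (x : Fin n → ℂ) : ℝ :=
  Real.sqrt (∑ i, Complex.normSq (x i))

noncomputable def fnorm {m n : ℕ} (A : Matrix (Fin m) (Fin n) ℂ) : ℝ :=
  Real.sqrt (∑ i, ∑ j, Complex.normSq (A i j))

open Matrix

lemma vecEnorm_nonneg {n : ℕ} (x : Fin n → ℂ) : 0 ≤ vecEnorm x := Real.sqrt_nonneg _

lemma vecEnorm_sq {n : ℕ} (x : Fin n → ℂ) : vecEnorm x ^ 2 = ∑ i, Complex.normSq (x i) :=
  Real.sq_sqrt (Finset.sum_nonneg fun _ _ => Complex.normSq_nonneg _)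

lemma vecEnorm_pos {n : ℕ} {x : Fin n → ℂ} (hx : x ≠ 0) : 0 < vecEnorm x := by
  obtain ⟨i, hi⟩ := Function.ne_iff.1 hx
  exact Real.sqrt_pos.2 <| Finset.sum_pos' (fun _ _ => Complex.normSq_nonneg _)
    ⟨i, Finset.mem_univ _, Complex.normSq_pos.2 hi⟩

lemma fnorm_nonneg {m n : ℕ} (A : Matrix (Fin m) (Fin n) ℂ) : 0 ≤ fnorm A := Real.sqrt_nonneg _

lemma fnorm_sq {m n : ℕ} (A : Matrix (Fin m) (Fin n) ℂ) :
    fnorm A ^ 2 = ∑ i, ∑ j, Complex.normSq (A i j) :=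
  Real.sq_sqrt (Finset.sum_nonneg fun _ _ => Finset.sum_nonneg fun _ _ => Complex.normSq_nonneg _)

lemma normSq_dotProduct_le {n : ℕ} (x y : Fin n → ℂ) :
    Complex.normSq (x ⬝ᵥ y) ≤ (∑ i, Complex.normSq (x i)) * ∑ i, Complex.normSq (y i) := by
  have htriangle : ‖x ⬝ᵥ y‖ ≤ ∑ i, ‖x i‖ * ‖y i‖ :=
    (norm_sum_le _ _).trans_eq (by simp only [norm_mul])
  calc Complex.normSq (x ⬝ᵥ y) = ‖x ⬝ᵥ y‖ ^ 2 := Complex.normSq_eq_norm_sq _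
    _ ≤ (∑ i, ‖x i‖ * ‖y i‖) ^ 2 := by gcongr
    _ ≤ (∑ i, ‖x i‖ ^ 2) * ∑ i, ‖y i‖ ^ 2 := Finset.sum_mul_sq_le_sq_mul_sq _ _ _
    _ = (∑ i, Complex.normSq (x i)) * ∑ i, Complex.normSq (y i) := by simp only [Complex.sq_norm]

lemma vecEnorm_vecMul_le {m n : ℕ} (x : Fin m → ℂ) (B : Matrix (Fin m) (Fin n) ℂ) :
    vecEnorm (vecMul x B) ≤ vecEnorm x * fnorm B := by
  rw [← sq_le_sq₀ (vecEnorm_nonneg _) (mul_nonneg (vecEnorm_nonneg _) (fnorm_nonneg _)),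
    mul_pow, vecEnorm_sq, vecEnorm_sq, fnorm_sq, Finset.sum_comm, Finset.mul_sum]
  exact Finset.sum_le_sum fun j _ => normSq_dotProduct_le x fun i => B i j

lemma sq_div_one_add_sq_ge_of_le_mul {x y z : ℝ} (hz : 0 < z) (h : z ≤ x * y) :
    x ^ 2 / (1 + x ^ 2) ≥ z ^ 2 / (y ^ 2 + z ^ 2) ∧
      (x ^ 2 / (1 + x ^ 2) = z ^ 2 / (y ^ 2 + z ^ 2) ↔ x * y = z) := by
  have hden : 0 < (1 + x ^ 2) * (y ^ 2 + z ^ 2) := by positivity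
  have hdiff : x ^ 2 / (1 + x ^ 2) - z ^ 2 / (y ^ 2 + z ^ 2) =
      ((x * y) ^ 2 - z ^ 2) / ((1 + x ^ 2) * (y ^ 2 + z ^ 2)) := by
    field_simp
    ring
  constructor
  · rw [ge_iff_le, ← sub_nonneg, hdiff]
    exact div_nonneg (sub_nonneg.2 (pow_le_pow_left₀ hz.le h 2)) hden.le
  · rw [← sub_eq_zero, hdiff, div_eq_zero_iff, or_iff_left hden.ne', sub_eq_zero,
      sq_eq_sq₀ (hz.le.trans h) hz.le]

theorem stmt_17 {n : ℕ} (v : Fin n → ℂ) (hv : v ≠ 0)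
    (A : Matrix (Fin n) (Fin n) ℂ) (hA : IsUnit A.det) :
    vecEnorm (Matrix.vecMul v A⁻¹) ^ 2 / (1 + vecEnorm (Matrix.vecMul v A⁻¹) ^ 2) ≥
      vecEnorm v ^ 2 / (fnorm A ^ 2 + vecEnorm v ^ 2) ∧
    (vecEnorm (Matrix.vecMul v A⁻¹) ^ 2 / (1 + vecEnorm (Matrix.vecMul v A⁻¹) ^ 2) =
        vecEnorm v ^ 2 / (fnorm A ^ 2 + vecEnorm v ^ 2) ↔
      vecEnorm (Matrix.vecMul v A⁻¹) * fnorm A = vecEnorm v) := by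
  have hv_eq : vecMul (vecMul v A⁻¹) A = v := by
    rw [vecMul_vecMul, nonsing_inv_mul A hA, vecMul_one]
  have hle : vecEnorm v ≤ vecEnorm (vecMul v A⁻¹) * fnorm A := by
    simpa only [hv_eq] using vecEnorm_vecMul_le (vecMul v A⁻¹) A
  exact sq_div_one_add_sq_ge_of_le_mul (vecEnorm_pos hv) hle
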